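/- Let n ∈ ℤ_{≥0}^r and 1 ≤ k, l ≤ r with k ≠ l, n_k ≥ 1 and n_l ≥ 1, and assume that n, n − e_k, n − e_l and n − e_k − e_l are all normal. Then for every m = 1,…,r: Λ_{n−e_k,m}(z) − Λ_{n−e_l,m}(z) = conj(γ_{n−e_k−e_l}^{kl}) Λ_{n,m}(z). -/

import Mathlib

open MeasureTheory Polynomial

noncomputable section

/-- A system of measures on the unit circle: each `μ j` is a probability measure,
carried by the unit circle `∂𝔻 = {z : |z| = 1}`, with infinite support. -/
def MopucSystem {r : ℕ} (μ : Fin r → Measure ℂ) : Prop :=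
  ∀ j, IsProbabilityMeasure (μ j) ∧ μ j ((Metric.sphere (0 : ℂ) 1)ᶜ) = 0 ∧
    ∀ s : Set ℂ, s.Finite → μ j (sᶜ) ≠ 0

/-- The inner product `⟨P, Q⟩_μ = ∫ P(z)·conj (Q(z)) dμ(z)`. -/
def pip (μ : Measure ℂ) (P Q : Polynomial ℂ) : ℂ :=
  ∫ z, P.eval z * (starRingEnd ℂ) (Q.eval z) ∂μ

/-- `⟨P, z^p⟩_μ`. -/
def mip (μ : Measure ℂ) (P : Polynomial ℂ) (p : ℕ) : ℂ :=
  pip μ P (X ^ p)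

/-- The moment `ν^p = ∫ z^p dμ(z)` for `p ∈ ℤ` (on the circle `z^{-m} = conj (z^m)`). -/
def mom (μ : Measure ℂ) (p : ℤ) : ℂ :=
  ∫ z, z ^ p ∂μ

/-- The linear position of the pair `(j, q)` (with `q < n j`): `(∑_{i<j} n i) + q`.
This enumerates the pairs, in lexicographic order, by `0, 1, …, |n| − 1`. -/
def linIdx {r : ℕ} (n : Fin r → ℕ) (c : (j : Fin r) × Fin (n j)) : ℕ :=
  (∑ i ∈ Finset.univ.filter (fun i => i < c.1), n i) + (c.2 : ℕ)

/-- The moment matrix `M_n`: rows are indexed by pairs `(j, q)` with `1 ≤ j ≤ r`,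
`0 ≤ q ≤ n j − 1`, columns by `p = 0, …, |n| − 1` (realized as pairs via the
order-preserving enumeration `linIdx`), and the entry at `((j,q), p)` is `ν_j^{p−q}`. -/
def Mmat {r : ℕ} (μ : Fin r → Measure ℂ) (n : Fin r → ℕ) :
    Matrix ((j : Fin r) × Fin (n j)) ((j : Fin r) × Fin (n j)) ℂ :=
  Matrix.of fun rq c => mom (μ rq.1) ((linIdx n c : ℤ) - ((rq.2 : ℕ) : ℤ))

/-- The index `n` is normal if `det M_n ≠ 0`.  (For `n = 0` the matrix is empty and its
determinant is `1`, so `n = 0` is normal, matching the convention of the paper.) -/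
def NormalIndex {r : ℕ} (μ : Fin r → Measure ℂ) (n : Fin r → ℕ) : Prop :=
  (Mmat μ n).det ≠ 0

/-- A type II multiple orthogonal polynomial for the multi-index `n`. -/
def IsTypeII {r : ℕ} (μ : Fin r → Measure ℂ) (n : Fin r → ℕ) (P : Polynomial ℂ) : Prop :=
  P ≠ 0 ∧ P.degree ≤ ((∑ j, n j : ℕ) : WithBot ℕ) ∧
    ∀ j, ∀ p : ℕ, p < n j → mip (μ j) P p = 0

/-- A type II* multiple orthogonal polynomial for the multi-index `n`. -/
def IsTypeIIStar {r : ℕ} (μ : Fin r → Measure ℂ) (n : Fin r → ℕ) (P : Polynomial ℂ) : Prop :=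
  P ≠ 0 ∧ P.degree ≤ ((∑ j, n j : ℕ) : WithBot ℕ) ∧
    ∀ j, ∀ p : ℕ, 1 ≤ p → p ≤ n j → mip (μ j) P p = 0

/-- A type I multiple orthogonal polynomial for the multi-index `n`:
a nonzero vector of polynomials with `deg (L j) ≤ n j − 1` (so `L j = 0` when `n j = 0`),
and `∑_j ⟨L j, z^p⟩_j = 0` for `p = 0, …, |n| − 2`. -/
def IsTypeI {r : ℕ} (μ : Fin r → Measure ℂ) (n : Fin r → ℕ) (L : Fin r → Polynomial ℂ) : Prop :=
  L ≠ 0 ∧ (∀ j, (L j).degree < ((n j : ℕ) : WithBot ℕ)) ∧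
    ∀ p : ℕ, p + 2 ≤ ∑ j, n j → ∑ j, mip (μ j) (L j) p = 0

/-- A type I* multiple orthogonal polynomial for the multi-index `n`:
a nonzero vector of polynomials with `deg (L j) ≤ n j − 1`,
and `∑_j ⟨L j, z^p⟩_j = 0` for `p = 1, …, |n| − 1`. -/
def IsTypeIStar {r : ℕ} (μ : Fin r → Measure ℂ) (n : Fin r → ℕ) (L : Fin r → Polynomial ℂ) : Prop :=
  L ≠ 0 ∧ (∀ j, (L j).degree < ((n j : ℕ) : WithBot ℕ)) ∧
    ∀ p : ℕ, 1 ≤ p → p + 1 ≤ ∑ j, n j → ∑ j, mip (μ j) (L j) p = 0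

/-- `Φ_n`: the monic type II polynomial of degree exactly `|n|`. -/
def IsPhi {r : ℕ} (μ : Fin r → Measure ℂ) (n : Fin r → ℕ) (P : Polynomial ℂ) : Prop :=
  IsTypeII μ n P ∧ P.Monic ∧ P.natDegree = ∑ j, n j

/-- `Φ*_n`: the type II* polynomial with `Φ*_n(0) = 1`. -/
def IsPhiStar {r : ℕ} (μ : Fin r → Measure ℂ) (n : Fin r → ℕ) (P : Polynomial ℂ) : Prop :=
  IsTypeIIStar μ n P ∧ P.eval 0 = 1

/-- `Λ_n`: the type I vector normalized by `∑_j ⟨Λ_{n,j}, z^{|n|−1}⟩_j = 1`. -/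
def IsLambda {r : ℕ} (μ : Fin r → Measure ℂ) (n : Fin r → ℕ) (L : Fin r → Polynomial ℂ) : Prop :=
  IsTypeI μ n L ∧ ∑ j, mip (μ j) (L j) ((∑ i, n i) - 1) = 1

/-- `Λ*_n`: the type I* vector normalized by `∑_j ⟨Λ*_{n,j}, 1⟩_j = 1`. -/
def IsLambdaStar {r : ℕ} (μ : Fin r → Measure ℂ) (n : Fin r → ℕ) (L : Fin r → Polynomial ℂ) : Prop :=
  IsTypeIStar μ n L ∧ ∑ j, mip (μ j) (L j) 0 = 1

/-- The multi-index `n + e_k`. -/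
def eAdd {r : ℕ} (n : Fin r → ℕ) (k : Fin r) : Fin r → ℕ :=
  Function.update n k (n k + 1)

/-- The multi-index `n − e_k` (used only when `n k ≥ 1`). -/
def eSub {r : ℕ} (n : Fin r → ℕ) (k : Fin r) : Fin r → ℕ :=
  Function.update n k (n k - 1)

/-! ### Auxiliary lemmas -/

lemma circle_ae {μ : Measure ℂ} (hs : μ ((Metric.sphere (0 : ℂ) 1)ᶜ) = 0) :
    ∀ᵐ z ∂μ, ‖z‖ = 1 := by
  rw [MeasureTheory.ae_iff]
  convert hs using 2
  ext z
  simp [mem_sphere_zero_iff_norm]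

lemma integrable_pq {μ : Measure ℂ} (hp : IsProbabilityMeasure μ)
    (hs : μ ((Metric.sphere (0 : ℂ) 1)ᶜ) = 0) (P Q : Polynomial ℂ) :
    Integrable (fun z => P.eval z * (starRingEnd ℂ) (Q.eval z)) μ := by
  haveI := hp
  have hc : Continuous fun z : ℂ => P.eval z * (starRingEnd ℂ) (Q.eval z) :=
    P.continuous.mul (Complex.continuous_conj.comp Q.continuous)
  obtain ⟨C, hC⟩ := (isCompact_sphere (0 : ℂ) 1).exists_bound_of_continuousOn hc.continuousOn
  refine ⟨hc.aestronglyMeasurable, HasFiniteIntegral.of_bounded (C := C) ?_⟩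
  filter_upwards [circle_ae hs] with z hz
  exact hC z (by simpa [mem_sphere_zero_iff_norm] using hz)

lemma conj_eq_inv {z : ℂ} (hz : ‖z‖ = 1) : (starRingEnd ℂ) z = z⁻¹ := by
  have h1 : z * (starRingEnd ℂ) z = 1 := by
    rw [Complex.mul_conj]
    norm_cast
    rw [Complex.normSq_eq_norm_sq]
    simp [hz]
  exact (eq_inv_of_mul_eq_one_left (by rw [mul_comm] at h1; exact h1)).symm ▸ rfl

lemma monom_int {μ : Measure ℂ} (hs : μ ((Metric.sphere (0 : ℂ) 1)ᶜ) = 0) (q p : ℕ) :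
    ∫ z, (z : ℂ) ^ q * (starRingEnd ℂ) (z ^ p) ∂μ = mom μ ((q : ℤ) - p) := by
  rw [mom]
  refine integral_congr_ae ?_
  filter_upwards [circle_ae hs] with z hz
  have hz0 : z ≠ 0 := by intro h; simp [h] at hz
  rw [conj_eq_inv (by simp [hz]), zpow_sub₀ hz0]
  simp [div_eq_mul_inv]

lemma mom_conj {μ : Measure ℂ} (hs : μ ((Metric.sphere (0 : ℂ) 1)ᶜ) = 0) (d : ℤ) :
    mom μ (-d) = (starRingEnd ℂ) (mom μ d) := by
  rw [mom, mom, ← integral_conj]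
  refine integral_congr_ae ?_
  filter_upwards [circle_ae hs] with z hz
  have hz0 : z ≠ 0 := by intro h; simp [h] at hz
  rw [conj_eq_inv (by simp [hz]), zpow_neg]

lemma natDeg_lt {P : Polynomial ℂ} {m : ℕ} (hm : 0 < m) (hd : P.degree < m) :
    P.natDegree < m := by
  rcases eq_or_ne P 0 with h | h
  · simpa [h] using hm
  · exact (Polynomial.natDegree_lt_iff_degree_lt h).2 hd

lemma mip_expand {μ : Measure ℂ} (hp : IsProbabilityMeasure μ)
    (hs : μ ((Metric.sphere (0 : ℂ) 1)ᶜ) = 0) (P : Polynomial ℂ) (m p : ℕ)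
    (hd : P.degree < m) :
    mip μ P p = ∑ q ∈ Finset.range m, P.coeff q * mom μ ((q : ℤ) - p) := by
  rcases Nat.eq_zero_or_pos m with hm | hm
  · subst hm
    have hP : P = 0 := by
      by_contra hP
      rw [Polynomial.degree_eq_natDegree hP] at hd
      exact absurd hd (by simp)
    simp [hP, mip, pip]
  have hnd := natDeg_lt hm hd
  rw [mip, pip]
  have : ∀ z : ℂ, P.eval z * (starRingEnd ℂ) ((X ^ p : Polynomial ℂ).eval z)
      = ∑ q ∈ Finset.range m, P.coeff q * (z ^ q * (starRingEnd ℂ) (z ^ p)) := by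
    intro z
    rw [Polynomial.eval_eq_sum_range' hnd, Finset.sum_mul]
    simp [mul_assoc]
  simp only [this]
  rw [integral_finset_sum _ (fun q _ => ((integrable_pq hp hs (X ^ q) (X ^ p)).congr ?_).const_mul _)]
  · refine Finset.sum_congr rfl fun q _ => ?_
    rw [integral_const_mul, monom_int hs q p]
  · exact Filter.Eventually.of_forall fun z => by simp

lemma pip_expand_right {μ : Measure ℂ} (hp : IsProbabilityMeasure μ)
    (hs : μ ((Metric.sphere (0 : ℂ) 1)ᶜ) = 0) (P Q : Polynomial ℂ) (m : ℕ)
    (hd : Q.degree < m) :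
    pip μ P Q = ∑ q ∈ Finset.range m, (starRingEnd ℂ) (Q.coeff q) * mip μ P q := by
  rcases Nat.eq_zero_or_pos m with hm | hm
  · subst hm
    have hQ : Q = 0 := by
      by_contra hQ
      rw [Polynomial.degree_eq_natDegree hQ] at hd
      exact absurd hd (by simp)
    simp [hQ, pip]
  have hnd := natDeg_lt hm hd
  rw [pip]
  have : ∀ z : ℂ, P.eval z * (starRingEnd ℂ) (Q.eval z)
      = ∑ q ∈ Finset.range m, (starRingEnd ℂ) (Q.coeff q)
          * (P.eval z * (starRingEnd ℂ) ((X ^ q : Polynomial ℂ).eval z)) := by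
    intro z
    rw [Polynomial.eval_eq_sum_range' hnd, map_sum, Finset.mul_sum]
    refine Finset.sum_congr rfl fun q _ => ?_
    simp only [map_mul, Polynomial.eval_pow, Polynomial.eval_X]
    ring
  simp only [this]
  rw [integral_finset_sum _ (fun q _ => (integrable_pq hp hs P (X ^ q)).const_mul _)]
  refine Finset.sum_congr rfl fun q _ => ?_
  rw [integral_const_mul, mip, pip]

lemma pip_expand_left {μ : Measure ℂ} (hp : IsProbabilityMeasure μ)
    (hs : μ ((Metric.sphere (0 : ℂ) 1)ᶜ) = 0) (P Q : Polynomial ℂ) (m : ℕ)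
    (hd : P.degree < m) :
    pip μ P Q = ∑ q ∈ Finset.range m, P.coeff q * (starRingEnd ℂ) (mip μ Q q) := by
  rcases Nat.eq_zero_or_pos m with hm | hm
  · subst hm
    have hP : P = 0 := by
      by_contra hP
      rw [Polynomial.degree_eq_natDegree hP] at hd
      exact absurd hd (by simp)
    simp [hP, pip]
  have hnd := natDeg_lt hm hd
  have hmon : ∀ q : ℕ, (∫ z, (z : ℂ) ^ q * (starRingEnd ℂ) (Q.eval z) ∂μ)
      = (starRingEnd ℂ) (mip μ Q q) := by
    intro q
    rw [mip, pip, ← integral_conj]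
    refine integral_congr_ae (Filter.Eventually.of_forall fun z => ?_)
    simp only [map_mul, Complex.conj_conj, Polynomial.eval_pow, Polynomial.eval_X]
    ring
  rw [pip]
  have : ∀ z : ℂ, P.eval z * (starRingEnd ℂ) (Q.eval z)
      = ∑ q ∈ Finset.range m, P.coeff q * (z ^ q * (starRingEnd ℂ) (Q.eval z)) := by
    intro z
    rw [Polynomial.eval_eq_sum_range' hnd, Finset.sum_mul]
    simp [mul_assoc]
  simp only [this]
  rw [integral_finset_sum _ (fun q _ => ((integrable_pq hp hs (X ^ q) Q).congr ?_).const_mul _)]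
  · refine Finset.sum_congr rfl fun q _ => ?_
    rw [integral_const_mul, hmon q]
  · exact Filter.Eventually.of_forall fun z => by simp

lemma mip_sub {μ : Measure ℂ} (hp : IsProbabilityMeasure μ)
    (hs : μ ((Metric.sphere (0 : ℂ) 1)ᶜ) = 0) (P Q : Polynomial ℂ) (p : ℕ) :
    mip μ (P - Q) p = mip μ P p - mip μ Q p := by
  haveI := hp
  rw [mip, mip, mip, pip, pip, pip,
    ← integral_sub (integrable_pq hp hs P _) (integrable_pq hp hs Q _)]
  refine integral_congr_ae (Filter.Eventually.of_forall fun z => ?_)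
  simp [sub_mul]

lemma mip_const_mul (μ : Measure ℂ) (a : ℂ) (P : Polynomial ℂ) (p : ℕ) :
    mip μ (C a * P) p = a * mip μ P p := by
  rw [mip, mip, pip, pip, ← integral_const_mul]
  refine integral_congr_ae (Filter.Eventually.of_forall fun z => ?_)
  simp [mul_assoc]

lemma sum_eSub {r : ℕ} (n : Fin r → ℕ) (k : Fin r) (hk : 1 ≤ n k) :
    ∑ j, eSub n k j = (∑ j, n j) - 1 := by
  unfold eSub
  rw [Finset.sum_update_of_mem (Finset.mem_univ k),
      ← Finset.sum_erase_add _ _ (Finset.mem_univ k)]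
  have : Finset.univ \ {k} = Finset.univ.erase k := by
    ext; simp [Finset.mem_erase, and_comm]
  rw [this]
  omega

lemma eSub_le {r : ℕ} (n : Fin r → ℕ) (k : Fin r) (j : Fin r) : eSub n k j ≤ n j := by
  unfold eSub
  rcases eq_or_ne j k with h | h
  · subst h; simp
  · rw [Function.update_of_ne h]

lemma eSub_ne {r : ℕ} (n : Fin r → ℕ) {k l : Fin r} (h : l ≠ k) : eSub n k l = n l :=
  Function.update_of_ne h _ _

lemma linIdx_lt {r : ℕ} (n : Fin r → ℕ) (c : (j : Fin r) × Fin (n j)) :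
    linIdx n c < ∑ j, n j := by
  unfold linIdx
  have h1 : (c.2 : ℕ) < n c.1 := c.2.2
  have h2 : n c.1 ≤ ∑ i ∈ Finset.univ.filter (fun i => ¬ i < c.1), n i :=
    Finset.single_le_sum (fun i _ => Nat.zero_le _) (by simp)
  have h3 := Finset.sum_filter_add_sum_filter_not Finset.univ (fun i => i < c.1) n
  omega

lemma linIdx_strict {r : ℕ} (n : Fin r → ℕ) (c d : (j : Fin r) × Fin (n j))
    (h : c.1 < d.1) : linIdx n c < linIdx n d := by
  unfold linIdx
  have h1 : (c.2 : ℕ) < n c.1 := c.2.2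
  have h2 : (∑ i ∈ Finset.univ.filter (fun i => i < c.1), n i) + n c.1
      ≤ ∑ i ∈ Finset.univ.filter (fun i => i < d.1), n i := by
    have hsub : insert c.1 (Finset.univ.filter (fun i => i < c.1))
        ⊆ Finset.univ.filter (fun i => i < d.1) := by
      intro x hx
      simp only [Finset.mem_insert, Finset.mem_filter, Finset.mem_univ, true_and] at hx ⊢
      rcases hx with h' | h'
      · subst h'; exact h
      · exact h'.trans h
    calc (∑ i ∈ Finset.univ.filter (fun i => i < c.1), n i) + n c.1
        = ∑ i ∈ insert c.1 (Finset.univ.filter (fun i => i < c.1)), n i := by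
          rw [Finset.sum_insert (by simp)]; ring
      _ ≤ _ := Finset.sum_le_sum_of_subset hsub
  omega

lemma linIdx_injective {r : ℕ} (n : Fin r → ℕ) : Function.Injective (linIdx n) := by
  intro c d h
  rcases lt_trichotomy c.1 d.1 with h1 | h1 | h1
  · exact absurd h (Nat.ne_of_lt (linIdx_strict n c d h1))
  · obtain ⟨j, q⟩ := c
    obtain ⟨j', q'⟩ := d
    cases h1
    simp only [linIdx] at h
    have : (q : ℕ) = (q' : ℕ) := by omega
    simp [Fin.ext_iff, this]
  · exact absurd h.symm (Nat.ne_of_lt (linIdx_strict n d c h1))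

lemma linIdx_surj {r : ℕ} (n : Fin r → ℕ) (p : ℕ) (hp : p < ∑ j, n j) :
    ∃ c, linIdx n c = p := by
  classical
  have hbij : Function.Bijective (fun c : (j : Fin r) × Fin (n j) =>
      (⟨linIdx n c, linIdx_lt n c⟩ : Fin (∑ j, n j))) := by
    rw [Fintype.bijective_iff_injective_and_card]
    constructor
    · intro c d h
      exact linIdx_injective n (by simpa [Fin.ext_iff] using h)
    · simp
  obtain ⟨c, hc⟩ := hbij.2 ⟨p, hp⟩
  exact ⟨c, by simpa [Fin.ext_iff] using hc⟩

lemma sum_mip_eq_mulVec {r : ℕ} (μ : Fin r → Measure ℂ) (hμ : MopucSystem μ)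
    (n : Fin r → ℕ) (L : Fin r → Polynomial ℂ)
    (hL : ∀ j, (L j).degree < ((n j : ℕ) : WithBot ℕ)) (c : (j : Fin r) × Fin (n j)) :
    ∑ j, mip (μ j) (L j) (linIdx n c)
      = ((Mmat μ n).conjTranspose).mulVec (fun c' => (L c'.1).coeff (c'.2 : ℕ)) c := by
  rw [Matrix.mulVec]
  have step1 : ∀ j, mip (μ j) (L j) (linIdx n c)
      = ∑ q ∈ Finset.range (n j), (L j).coeff q * mom (μ j) ((q : ℤ) - linIdx n c) :=
    fun j => mip_expand (hμ j).1 (hμ j).2.1 (L j) (n j) (linIdx n c) (hL j)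
  simp only [step1]
  have expand : dotProduct (fun j => (Mmat μ n).conjTranspose c j)
      (fun c' => (L c'.1).coeff (c'.2 : ℕ))
      = ∑ j, ∑ q : Fin (n j), (Mmat μ n).conjTranspose c ⟨j, q⟩ * (L j).coeff (q : ℕ) := by
    rw [dotProduct, ← Finset.univ_sigma_univ, Finset.sum_sigma]
  rw [expand]
  refine Finset.sum_congr rfl fun j _ => ?_
  rw [← Fin.sum_univ_eq_sum_range (fun q => (L j).coeff q * mom (μ j) ((q : ℤ) - linIdx n c))]
  refine Finset.sum_congr rfl fun q _ => ?_
  rw [Matrix.conjTranspose_apply]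
  have hstar : star (Mmat μ n ⟨j, q⟩ c) = mom (μ j) (((q : ℕ) : ℤ) - linIdx n c) := by
    rw [show ((q : ℕ) : ℤ) - (linIdx n c : ℤ) = -((linIdx n c : ℤ) - ((q : ℕ) : ℤ)) by ring,
      mom_conj (hμ j).2.1]
    rfl
  rw [hstar, mul_comm]

lemma unique_vec {r : ℕ} (μ : Fin r → Measure ℂ) (hμ : MopucSystem μ) (n : Fin r → ℕ)
    (hn : NormalIndex μ n) (L L' : Fin r → Polynomial ℂ)
    (hL : ∀ j, (L j).degree < ((n j : ℕ) : WithBot ℕ))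
    (hL' : ∀ j, (L' j).degree < ((n j : ℕ) : WithBot ℕ))
    (h : ∀ p : ℕ, p < ∑ j, n j → ∑ j, mip (μ j) (L j) p = ∑ j, mip (μ j) (L' j) p) :
    L = L' := by
  classical
  set A := (Mmat μ n).conjTranspose with hA
  have hdet : IsUnit A.det := by
    rw [hA, Matrix.det_conjTranspose]
    simpa [isUnit_iff_ne_zero] using fun h0 => hn (by simpa using congrArg star h0)
  set x : ((j : Fin r) × Fin (n j)) → ℂ := fun c => (L c.1).coeff (c.2 : ℕ) with hx
  set y : ((j : Fin r) × Fin (n j)) → ℂ := fun c => (L' c.1).coeff (c.2 : ℕ) with hy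
  have hmv : A.mulVec x = A.mulVec y := by
    funext c
    rw [← sum_mip_eq_mulVec μ hμ n L hL c, ← sum_mip_eq_mulVec μ hμ n L' hL' c]
    exact h _ (linIdx_lt n c)
  have hxy : x = y := by
    have := congrArg (fun v => A⁻¹.mulVec v) hmv
    simpa [Matrix.mulVec_mulVec, Matrix.nonsing_inv_mul A hdet] using this
  funext j
  ext q
  rcases lt_or_ge q (n j) with hq | hq
  · exact congrFun hxy ⟨j, ⟨q, hq⟩⟩
  · rw [Polynomial.coeff_eq_zero_of_degree_lt, Polynomial.coeff_eq_zero_of_degree_lt]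
    · exact lt_of_lt_of_le (hL' j) (by exact_mod_cast Nat.cast_le.2 hq)
    · exact lt_of_lt_of_le (hL j) (by exact_mod_cast Nat.cast_le.2 hq)

lemma lambda_phi_pair {r : ℕ} (μ : Fin r → Measure ℂ) (hμ : MopucSystem μ)
    (n' : Fin r → ℕ) (Φ : Polynomial ℂ) (hΦ : IsPhi μ n' Φ)
    (Λ' : Fin r → Polynomial ℂ) (hΛ' : IsLambda μ n' Λ') (hM : 1 ≤ ∑ j, n' j) :
    ∑ j, mip (μ j) (Λ' j) (∑ j, n' j)
      = -((starRingEnd ℂ) (Φ.coeff ((∑ j, n' j) - 1))) := by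
  obtain ⟨m0, hm0⟩ : ∃ m0, ∑ j, n' j = m0 + 1 := ⟨(∑ j, n' j) - 1, by omega⟩
  have hS0 : ∑ j, pip (μ j) Φ (Λ' j) = 0 := by
    refine Finset.sum_eq_zero fun j _ => ?_
    rw [pip_expand_right (hμ j).1 (hμ j).2.1 Φ (Λ' j) (n' j) (hΛ'.1.2.1 j)]
    refine Finset.sum_eq_zero fun q hq => ?_
    rw [hΦ.1.2.2 j q (Finset.mem_range.1 hq), mul_zero]
  have hdΦ : Φ.degree < ((m0 + 2 : ℕ) : WithBot ℕ) := by
    refine lt_of_le_of_lt hΦ.1.2.1 ?_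
    rw [hm0]
    exact_mod_cast Nat.lt_succ_self (m0 + 1)
  have hSexp : ∑ j, pip (μ j) Φ (Λ' j)
      = ∑ p ∈ Finset.range (m0 + 2),
          Φ.coeff p * (starRingEnd ℂ) (∑ j, mip (μ j) (Λ' j) p) := by
    have hj : ∀ j, pip (μ j) Φ (Λ' j) = ∑ p ∈ Finset.range (m0 + 2),
        Φ.coeff p * (starRingEnd ℂ) (mip (μ j) (Λ' j) p) :=
      fun j => pip_expand_left (hμ j).1 (hμ j).2.1 Φ (Λ' j) (m0 + 2) hdΦ
    simp only [hj]
    rw [Finset.sum_comm]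
    refine Finset.sum_congr rfl fun p _ => ?_
    rw [map_sum, Finset.mul_sum]
  have hzero : ∀ p ∈ Finset.range m0,
      Φ.coeff p * (starRingEnd ℂ) (∑ j, mip (μ j) (Λ' j) p) = 0 := by
    intro p hp
    rw [hΛ'.1.2.2 p (by rw [hm0]; simp only [Finset.mem_range] at hp; omega),
      map_zero, mul_zero]
  have hnorm : ∑ j, mip (μ j) (Λ' j) m0 = 1 := by
    have h := hΛ'.2
    rwa [show (∑ i, n' i) - 1 = m0 by omega] at h
  have hmonic : Φ.coeff (m0 + 1) = 1 := by
    have h := hΦ.2.1.coeff_natDegree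
    rwa [hΦ.2.2, hm0] at h
  have hkey : (0 : ℂ) = Φ.coeff m0
      + (starRingEnd ℂ) (∑ j, mip (μ j) (Λ' j) (m0 + 1)) := by
    rw [← hS0, hSexp, Finset.sum_range_succ, Finset.sum_range_succ,
      Finset.sum_eq_zero hzero, hnorm, hmonic]
    simp
  rw [hm0, show m0 + 1 - 1 = m0 from rfl]
  have hs : (starRingEnd ℂ) (∑ j, mip (μ j) (Λ' j) (m0 + 1)) = -Φ.coeff m0 := by
    linear_combination hkey.symm
  calc ∑ j, mip (μ j) (Λ' j) (m0 + 1)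
      = (starRingEnd ℂ) ((starRingEnd ℂ) (∑ j, mip (μ j) (Λ' j) (m0 + 1))) :=
        (Complex.conj_conj _).symm
    _ = -((starRingEnd ℂ) (Φ.coeff m0)) := by rw [hs, map_neg]

/-- if `k ≠ l`, `n k, n l ≥ 1` and `n`, `n−e_k`, `n−e_l`, `n−e_k−e_l` are
normal, then for every `m`:
`Λ_{n−e_k,m} − Λ_{n−e_l,m} = conj(γ_{n−e_k−e_l}^{kl}) Λ_{n,m}`, where `γ` is determined by
`Φ_{n−e_l} − Φ_{n−e_k} = γ Φ_{n−e_k−e_l}`. -/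
theorem compatibility_typeI (r : ℕ) (hr : 0 < r) (μ : Fin r → Measure ℂ)
    (hμ : MopucSystem μ) (n : Fin r → ℕ) (k l : Fin r) (hkl : k ≠ l)
    (hk : 1 ≤ n k) (hl : 1 ≤ n l)
    (hn : NormalIndex μ n) (hnk : NormalIndex μ (eSub n k))
    (hnl : NormalIndex μ (eSub n l)) (hnkl : NormalIndex μ (eSub (eSub n k) l))
    (Φkl : Polynomial ℂ) (hΦkl : IsPhi μ (eSub (eSub n k) l) Φkl)
    (Φk : Polynomial ℂ) (hΦk : IsPhi μ (eSub n k) Φk)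
    (Φl : Polynomial ℂ) (hΦl : IsPhi μ (eSub n l) Φl)
    (γ : ℂ) (hγ : Φl - Φk = C γ * Φkl)
    (Λ : Fin r → Polynomial ℂ) (hΛ : IsLambda μ n Λ)
    (Λk : Fin r → Polynomial ℂ) (hΛk : IsLambda μ (eSub n k) Λk)
    (Λl : Fin r → Polynomial ℂ) (hΛl : IsLambda μ (eSub n l) Λl) :
    ∀ m, Λk m - Λl m = C ((starRingEnd ℂ) γ) * Λ m := by
  classical
  have hps : ∀ j, IsProbabilityMeasure (μ j) := fun j => (hμ j).1
  have hss : ∀ j, μ j ((Metric.sphere (0 : ℂ) 1)ᶜ) = 0 := fun j => (hμ j).2.1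
  set N := ∑ j, n j with hN
  have hNk : ∑ j, eSub n k j = N - 1 := sum_eSub n k hk
  have hNl : ∑ j, eSub n l j = N - 1 := sum_eSub n l hl
  have hN2 : 2 ≤ N := by
    have h2 : n k + n l ≤ N := by
      rw [hN, ← Finset.sum_pair hkl]
      exact Finset.sum_le_sum_of_subset (Finset.subset_univ _)
    omega
  have hNkl : ∑ j, eSub (eSub n k) l j = N - 2 := by
    rw [sum_eSub _ l (by rw [eSub_ne n (Ne.symm hkl)]; exact hl), hNk, Nat.sub_sub]
  -- value of γ
  have hγc : γ = Φl.coeff (N - 2) - Φk.coeff (N - 2) := by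
    have hkl2 : Φkl.coeff (N - 2) = 1 := by
      have h := hΦkl.2.1.coeff_natDegree
      rwa [hΦkl.2.2, hNkl] at h
    have h := congrArg (fun P => Polynomial.coeff P (N - 2)) hγ
    simp only [Polynomial.coeff_sub, Polynomial.coeff_C_mul, hkl2, mul_one] at h
    exact h.symm
  -- the two pairing identities
  have hak : ∑ j, mip (μ j) (Λk j) (N - 1)
      = -((starRingEnd ℂ) (Φk.coeff (N - 2))) := by
    have h := lambda_phi_pair μ hμ (eSub n k) Φk hΦk Λk hΛk (by omega)
    rwa [hNk, show N - 1 - 1 = N - 2 by rw [Nat.sub_sub]] at h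
  have hal : ∑ j, mip (μ j) (Λl j) (N - 1)
      = -((starRingEnd ℂ) (Φl.coeff (N - 2))) := by
    have h := lambda_phi_pair μ hμ (eSub n l) Φl hΦl Λl hΛl (by omega)
    rwa [hNl, show N - 1 - 1 = N - 2 by rw [Nat.sub_sub]] at h
  -- apply uniqueness
  have hdeg : ∀ j, (Λk j - Λl j).degree < ((n j : ℕ) : WithBot ℕ) := by
    intro j
    refine lt_of_le_of_lt (Polynomial.degree_sub_le _ _) (max_lt ?_ ?_)
    · exact lt_of_lt_of_le (hΛk.1.2.1 j) (by exact_mod_cast Nat.cast_le.2 (eSub_le n k j))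
    · exact lt_of_lt_of_le (hΛl.1.2.1 j) (by exact_mod_cast Nat.cast_le.2 (eSub_le n l j))
  have hdeg' : ∀ j, (C ((starRingEnd ℂ) γ) * Λ j).degree < ((n j : ℕ) : WithBot ℕ) := by
    intro j
    refine lt_of_le_of_lt ?_ (hΛ.1.2.1 j)
    rw [← Polynomial.smul_eq_C_mul]
    exact Polynomial.degree_smul_le _ _
  have key : (fun j => Λk j - Λl j) = (fun j => C ((starRingEnd ℂ) γ) * Λ j) := by
    refine unique_vec μ hμ n hn _ _ hdeg hdeg' ?_
    intro p hp
    have hLHS : ∑ j, mip (μ j) (Λk j - Λl j) p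
        = (∑ j, mip (μ j) (Λk j) p) - ∑ j, mip (μ j) (Λl j) p := by
      rw [← Finset.sum_sub_distrib]
      exact Finset.sum_congr rfl fun j _ => mip_sub (hps j) (hss j) _ _ _
    have hRHS : ∑ j, mip (μ j) (C ((starRingEnd ℂ) γ) * Λ j) p
        = (starRingEnd ℂ) γ * ∑ j, mip (μ j) (Λ j) p := by
      rw [Finset.mul_sum]
      exact Finset.sum_congr rfl fun j _ => mip_const_mul _ _ _ _
    rw [hLHS, hRHS]
    have hcases : p + 2 ≤ N - 1 ∨ p = N - 2 ∨ p = N - 1 := by omega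
    rcases hcases with hc | hc | hc
    · rw [hΛk.1.2.2 p (by omega), hΛl.1.2.2 p (by omega), hΛ.1.2.2 p (by omega)]
      ring
    · subst hc
      have h1 : ∑ j, mip (μ j) (Λk j) (N - 2) = 1 := by
        have h := hΛk.2
        rwa [hNk, show N - 1 - 1 = N - 2 by rw [Nat.sub_sub]] at h
      have h2 : ∑ j, mip (μ j) (Λl j) (N - 2) = 1 := by
        have h := hΛl.2
        rwa [hNl, show N - 1 - 1 = N - 2 by rw [Nat.sub_sub]] at h
      rw [h1, h2, hΛ.1.2.2 (N - 2) (by omega)]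
      ring
    · subst hc
      have h3 : ∑ j, mip (μ j) (Λ j) (N - 1) = 1 := hΛ.2
      rw [hak, hal, h3, hγc]
      simp only [map_sub]
      ring
  intro m
  exact congrFun key m
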